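/- arXiv:2402.01111 — 5 statements merged into one kernel-verified Lean document; each statement's English description precedes it below -/
import Mathlib

section
/- Let d and m be positive integers and let 𝒳 be a finite nonempty subset of (Δ^d)^m, i.e., each x ∈ 𝒳 is a vector (x_i)_{i=1}^{dm} in ℝ^{dm} whose m consecutive blocks of length d are probability vectors (nonnegative entries summing to 1). Then there exists y = (y_i)_{i=1}^{dm} in the convex hull of 𝒳 such that for every x ∈ 𝒳, ∑_{i=1}^{dm} x_i / y_i ≤ m·d, where any term with x_i = 0 is interpreted as 0 (in particular y_i > 0 whenever x_i > 0 for some x ∈ 𝒳 appearing in the sum). -/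
/-!
Let `S` be the set of coordinates that are positive for some `x ∈ 𝒳`, and take `y` maximizing
`∏_{p ∈ S} y_p` over the (compact) convex hull of `𝒳`. The centroid of `𝒳` makes this product
positive, hence `y_p > 0` on `S`. Since the product is maximal at `y`, its derivative in the
direction `x - y` is nonpositive, which after dividing by the product reads
`∑_{p ∈ S} (x_p / y_p - 1) ≤ 0`, i.e. `∑_p x_p / y_p ≤ |S| ≤ m d`.
-/

open Set Finset

variable {E : Type*} [NormedAddCommGroup E] [NormedSpace ℝ E] {ι : Type*}

theorem sum_div_le_card_of_isMaxOn_prod {K : Set E} (hK : Convex ℝ K) (S : Finset ι)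
    (ℓ : ι → StrongDual ℝ E) {x y : E} (hx : x ∈ K) (hy : y ∈ K)
    (hmax : IsMaxOn (fun z ↦ ∏ p ∈ S, ℓ p z) K y) (hpos : ∀ p ∈ S, 0 < ℓ p y) :
    ∑ p ∈ S, ℓ p x / ℓ p y ≤ #S := by
  classical
  set P := ∏ p ∈ S, ℓ p y
  have hP : 0 < P := prod_pos hpos
  have hderiv : HasFDerivAt (fun z ↦ ∏ p ∈ S, ℓ p z)
      (∑ p ∈ S, (∏ q ∈ S.erase p, ℓ q y) • ℓ p) y :=
    HasFDerivAt.finsetProd fun p _ ↦ (ℓ p).hasFDerivAt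
  have hfirst := hmax.localize.hasFDerivWithinAt_nonpos hderiv.hasFDerivWithinAt
    (sub_mem_posTangentConeAt_of_segment_subset (hK.segment_subset hy hx))
  have hterm : ∀ p ∈ S, (∏ q ∈ S.erase p, ℓ q y) * ℓ p (x - y) = P * (ℓ p x / ℓ p y - 1) := by
    intro p hp
    rw [show P = ℓ p y * ∏ q ∈ S.erase p, ℓ q y from (mul_prod_erase S _ hp).symm, map_sub]
    field_simp [(hpos p hp).ne']
  simp only [FunLike.coe_sum, Finset.sum_apply, FunLike.coe_smul,
    Pi.smul_apply, smul_eq_mul] at hfirst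
  rw [sum_congr rfl hterm, ← mul_sum, sum_sub_distrib] at hfirst
  simpa using nonpos_of_mul_nonpos_right hfirst hP

theorem exists_mem_convexHull_forall_pos (X : Finset E) (hX : X.Nonempty)
    (ℓ : ι → StrongDual ℝ E) (hnonneg : ∀ x ∈ X, ∀ p, 0 ≤ ℓ p x) :
    ∃ z ∈ convexHull ℝ (X : Set E), ∀ p, (∃ x ∈ X, 0 < ℓ p x) → 0 < ℓ p z := by
  refine ⟨X.centerMass (fun _ ↦ 1) id,
    X.centerMass_mem_convexHull (fun _ _ ↦ zero_le_one) (by simpa using hX) fun _ ↦ id, ?_⟩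
  rintro p ⟨x, hx, hpx⟩
  simp only [centerMass, sum_const, nsmul_eq_mul, mul_one, one_smul, id, map_smul, map_sum,
    smul_eq_mul]
  exact mul_pos (by simpa using hX) (sum_pos' (fun z hz ↦ hnonneg z hz p) ⟨x, hx, hpx⟩)

theorem convexHull_subset_setOf_forall_nonneg (X : Set E) (ℓ : ι → StrongDual ℝ E)
    (hnonneg : ∀ x ∈ X, ∀ p, 0 ≤ ℓ p x) :
    convexHull ℝ X ⊆ {z | ∀ p, 0 ≤ ℓ p z} := by
  refine convexHull_min hnonneg ?_
  rw [ofPred_forall]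
  exact convex_iInter fun p ↦ convex_halfSpace_ge (ℓ p).toLinearMap.isLinear 0

theorem exists_mem_convexHull_sum_div_le_card [Fintype ι] (X : Finset E) (hX : X.Nonempty)
    (ℓ : ι → StrongDual ℝ E) (hnonneg : ∀ x ∈ X, ∀ p, 0 ≤ ℓ p x) :
    ∃ y ∈ convexHull ℝ (X : Set E), (∀ p, (∃ x ∈ X, 0 < ℓ p x) → 0 < ℓ p y) ∧
      ∀ x ∈ X, ∑ p, ℓ p x / ℓ p y ≤ Fintype.card ι := by
  classical
  set S := univ.filter fun p ↦ ∃ x ∈ X, 0 < ℓ p x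
  obtain ⟨z, hzK, hz⟩ := exists_mem_convexHull_forall_pos X hX ℓ hnonneg
  obtain ⟨y, hyK, hmax⟩ := (X.finite_toSet.isCompact_convexHull (𝕜 := ℝ)).exists_isMaxOn ⟨z, hzK⟩
    (continuous_finsetProd S fun p _ ↦ (ℓ p).continuous).continuousOn
  have hKnonneg := convexHull_subset_setOf_forall_nonneg (X : Set E) ℓ hnonneg
  have hprod : 0 < ∏ p ∈ S, ℓ p y :=
    (prod_pos fun p hp ↦ hz p (mem_filter.1 hp).2).trans_le (hmax hzK)
  have hpos : ∀ p ∈ S, 0 < ℓ p y := fun p hp ↦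
    (hKnonneg hyK p).lt_of_ne' (prod_ne_zero_iff.1 hprod.ne' p hp)
  refine ⟨y, hyK, fun p hp ↦ hpos p (mem_filter.2 ⟨mem_univ p, hp⟩), fun x hx ↦ ?_⟩
  have hsupp : ∑ p ∈ S, ℓ p x / ℓ p y = ∑ p, ℓ p x / ℓ p y := by
    refine sum_subset (subset_univ S) fun p _ hp ↦ ?_
    have : ℓ p x = 0 :=
      ((hnonneg x hx p).eq_of_not_lt fun h ↦ hp (mem_filter.2 ⟨mem_univ p, x, hx, h⟩)).symm
    rw [this, zero_div]
  calc ∑ p, ℓ p x / ℓ p y = ∑ p ∈ S, ℓ p x / ℓ p y := hsupp.symm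
    _ ≤ #S := sum_div_le_card_of_isMaxOn_prod (convex_convexHull ℝ _) S ℓ
        (subset_convexHull ℝ _ hx) hyK hmax hpos
    _ ≤ Fintype.card ι := by exact_mod_cast card_le_univ S

theorem stmt1_general (d m : ℕ)
    (X : Finset (Fin m → Fin d → ℝ)) (hX : X.Nonempty)
    (hsimplex : ∀ x ∈ X, (∀ i j, 0 ≤ x i j) ∧ ∀ i, ∑ j, x i j = 1) :
    ∃ y ∈ convexHull ℝ (X : Set (Fin m → Fin d → ℝ)),
      (∀ i j, (∃ x ∈ X, 0 < x i j) → 0 < y i j) ∧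
      ∀ x ∈ X, ∑ i, ∑ j, x i j / y i j ≤ (m : ℝ) * d := by
  let ℓ : Fin m × Fin d → StrongDual ℝ (Fin m → Fin d → ℝ) := fun p ↦
    .proj p.2 ∘L .proj p.1
  obtain ⟨y, hy, hpos, hbound⟩ := exists_mem_convexHull_sum_div_le_card X hX ℓ
    fun x hx p ↦ (hsimplex x hx).1 p.1 p.2
  refine ⟨y, hy, fun i j h ↦ hpos (i, j) h, fun x hx ↦ ?_⟩
  simpa [ℓ, Fintype.sum_prod_type] using hbound x hx

/-- (Experimental-design lemma.) Let `𝒳` be a finite nonempty family of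
vectors in `(Δ^d)^m`, i.e. each `x ∈ 𝒳` consists of `m` blocks of length `d`, each block a
probability vector. Then there is `y` in the convex hull of `𝒳` such that
`∑_{i,j} x i j / y i j ≤ m·d` for every `x ∈ 𝒳` (terms with zero numerator count as `0`;
moreover `y i j > 0` whenever some `x ∈ 𝒳` has `x i j > 0`). -/
theorem stmt1 (d m : ℕ) (hd : 0 < d) (hm : 0 < m)
    (X : Finset (Fin m → Fin d → ℝ)) (hX : X.Nonempty)
    (hsimplex : ∀ x ∈ X, (∀ i j, 0 ≤ x i j) ∧ ∀ i, ∑ j, x i j = 1) :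
    ∃ y ∈ convexHull ℝ (X : Set (Fin m → Fin d → ℝ)),
      (∀ i j, (∃ x ∈ X, 0 < x i j) → 0 < y i j) ∧
      ∀ x ∈ X, ∑ i, ∑ j, x i j / y i j ≤ (m : ℝ) * d :=
  stmt1_general d m X hX hsimplex
end

section
/- Let P' and P'' be two transition kernels of an absorbing Markov game over state space 𝒮 ∪ {s†} with the same horizon H, such that P' is (1/H)-multiplicatively accurate to P''. Then for every Markov policy pair (μ,ν) and every (h,s,a,b) ∈ [H] × 𝒮 × 𝒜 × ℬ, the visitation probabilities satisfy (1/4)·V^{μ,ν}(1_{h,s,a,b}, P') ≤ V^{μ,ν}(1_{h,s,a,b}, P'') ≤ 3·V^{μ,ν}(1_{h,s,a,b}, P'). -/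
/-- Value-to-go of a Markov-policy pair `(μ, ν)` in a finite two-player zero-sum Markov
game with transition kernel `P` and reward `r`: `Vfuel P r μ ν n h s` is the expected sum
of the rewards collected in the `n` steps `h, h+1, …, h+n−1`, starting from state `s` at
step `h`, the two actions being drawn independently from `μ h s` and `ν h s`. -/
noncomputable def Vfuel {S A B : Type*} [Fintype S] [Fintype A] [Fintype B]
    (P : ℕ → S → A → B → S → ℝ) (r : ℕ → S → A → B → ℝ)
    (μ : ℕ → S → A → ℝ) (ν : ℕ → S → B → ℝ) : ℕ → ℕ → S → ℝ
  | 0, _, _ => 0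
  | n + 1, h, s =>
      ∑ a, ∑ b, μ h s a * ν h s b *
        (r h s a b + ∑ s', P h s a b s' * Vfuel P r μ ν n (h + 1) s')

/-- `val H P r μ ν s₁ = V^{μ,ν}(r, P)`: the expected total reward
`𝔼_{μ×ν}[∑_{h=1}^H r_h(s_h,a_h,b_h)]` over the horizon `H`, starting at `s₁` at step 1. -/
noncomputable def val {S A B : Type*} [Fintype S] [Fintype A] [Fintype B]
    (H : ℕ) (P : ℕ → S → A → B → S → ℝ) (r : ℕ → S → A → B → ℝ)
    (μ : ℕ → S → A → ℝ) (ν : ℕ → S → B → ℝ) (s₁ : S) : ℝ :=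
  Vfuel P r μ ν H 1 s₁

/-- `P` is a valid transition kernel over the steps `h ∈ [H] = {1, …, H}`. -/
def IsKernel {S A B : Type*} [Fintype S] (H : ℕ) (P : ℕ → S → A → B → S → ℝ) : Prop :=
  ∀ h ∈ Finset.Icc 1 H, ∀ s a b, (∀ s', 0 ≤ P h s a b s') ∧ ∑ s', P h s a b s' = 1

/-- `μ` is a valid Markov policy over the steps `h ∈ [H] = {1, …, H}`. -/
def IsPolicy {S A : Type*} [Fintype A] (H : ℕ) (μ : ℕ → S → A → ℝ) : Prop :=
  ∀ h ∈ Finset.Icc 1 H, ∀ s, (∀ a, 0 ≤ μ h s a) ∧ ∑ a, μ h s a = 1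

/-- The indicator reward `1_{h,s,a,b}`, equal to `1` at `(h,s,a,b)` and `0` elsewhere;
`val H P (ind h s a b) μ ν s₁` is the probability of visiting `(s,a,b)` at step `h`. -/
noncomputable def ind {S A B : Type*} [DecidableEq S] [DecidableEq A] [DecidableEq B]
    (h : ℕ) (s : S) (a : A) (b : B) : ℕ → S → A → B → ℝ :=
  fun h' s' a' b' => if h' = h ∧ s' = s ∧ a' = a ∧ b' = b then 1 else 0

/-!
Before step `h` the indicator reward vanishes, so the probability of visiting `(s, a, b)` at
step `h` is a sum over paths of products of policy weights and of `h - 1` transition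
probabilities. Paths through `s†` contribute nothing, since `s†` is never left, so only
transitions between proper states enter, and multiplicative accuracy compares the two sums
termwise up to the factors `(1 ± 1/H)^(h-1)`. These lie in `[1/4, 3]` since `(1 + 1/m)^m ≤ e`.
-/

open Finset

def IsAbsorbingKernel {S A B : Type*} [Fintype S] (H : ℕ)
    (P : ℕ → Option S → A → B → Option S → ℝ) : Prop :=
  IsKernel H P ∧ ∀ h ∈ Icc 1 H, ∀ a b, P h none a b none = 1

lemma IsAbsorbingKernel.apply_none_some {S A B : Type*} [Fintype S] {H : ℕ}
    {P : ℕ → Option S → A → B → Option S → ℝ} (hP : IsAbsorbingKernel H P) {h₀ : ℕ}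
    (hh₀ : h₀ ∈ Icc 1 H) (a : A) (b : B) (t : S) : P h₀ none a b (some t) = 0 := by
  have hsum := (hP.1 h₀ hh₀ none a b).2
  rw [Fintype.sum_option, hP.2 h₀ hh₀ a b, add_eq_left] at hsum
  exact (sum_eq_zero_iff_of_nonneg fun t _ => (hP.1 h₀ hh₀ none a b).1 (some t)).1 hsum t
    (mem_univ t)

section

variable {X A B : Type*} [Fintype X] [Fintype A] [Fintype B]
  [DecidableEq X] [DecidableEq A] [DecidableEq B]
  {P : ℕ → X → A → B → X → ℝ} {μ : ℕ → X → A → ℝ} {ν : ℕ → X → B → ℝ}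
  {h : ℕ} {x : X} {a : A} {b : B}

lemma vfuel_ind_of_lt : ∀ {n h₀ : ℕ}, h < h₀ → ∀ y, Vfuel P (ind h x a b) μ ν n h₀ y = 0
  | 0, _, _, _ => rfl
  | n + 1, _, hlt, _ => by
    simp [Vfuel, ind, hlt.ne', vfuel_ind_of_lt (n := n) (Nat.lt_succ_of_lt hlt)]

lemma vfuel_ind_succ_self (n : ℕ) (y : X) :
    Vfuel P (ind h x a b) μ ν (n + 1) h y = if y = x then μ h x a * ν h x b else 0 := by
  by_cases hy : y = x
  · subst hy
    simp [Vfuel, ind, vfuel_ind_of_lt (Nat.lt_succ_self h), ite_and]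
  · simp [Vfuel, ind, vfuel_ind_of_lt (Nat.lt_succ_self h), hy]

lemma vfuel_ind_nonneg {H : ℕ} (hP : IsKernel H P) (hμ : IsPolicy H μ) (hν : IsPolicy H ν)
    (hhH : h ≤ H) : ∀ n {h₀ : ℕ}, 1 ≤ h₀ → ∀ y, 0 ≤ Vfuel P (ind h x a b) μ ν n h₀ y
  | 0, _, _, _ => le_rfl
  | n + 1, h₀, h1, y => by
    rcases lt_or_ge h h₀ with hlt | hle
    · rw [vfuel_ind_of_lt hlt]
    have hmem : h₀ ∈ Icc 1 H := mem_Icc.2 ⟨h1, hle.trans hhH⟩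
    refine sum_nonneg fun a' _ => sum_nonneg fun b' _ => ?_
    have hind : 0 ≤ ind h x a b h₀ y a' b' := by unfold ind; split_ifs <;> norm_num
    exact mul_nonneg (mul_nonneg ((hμ h₀ hmem y).1 a') ((hν h₀ hmem y).1 b')) <|
      add_nonneg hind <| sum_nonneg fun y' _ => mul_nonneg ((hP h₀ hmem y a' b').1 y')
        (vfuel_ind_nonneg hP hμ hν hhH n (Nat.le_succ_of_le h1) y')

end

section

variable {S A B : Type*} [Fintype S] [Fintype A] [Fintype B]
  [DecidableEq S] [DecidableEq A] [DecidableEq B]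
  {H : ℕ} {P Q : ℕ → Option S → A → B → Option S → ℝ}
  {μ : ℕ → Option S → A → ℝ} {ν : ℕ → Option S → B → ℝ} {h : ℕ}

lemma vfuel_ind_none (hP : IsAbsorbingKernel H P) (hhH : h ≤ H) (s : S) (a : A) (b : B) :
    ∀ n {h₀ : ℕ}, 1 ≤ h₀ → Vfuel P (ind h (some s) a b) μ ν n h₀ none = 0
  | 0, _, _ => rfl
  | n + 1, h₀, h1 => by
    rcases lt_or_ge h h₀ with hlt | hle
    · exact vfuel_ind_of_lt hlt none
    have hmem : h₀ ∈ Icc 1 H := mem_Icc.2 ⟨h1, hle.trans hhH⟩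
    simp [Vfuel, ind, Fintype.sum_option, hP.apply_none_some hmem,
      vfuel_ind_none hP hhH s a b n (Nat.le_succ_of_le h1)]

lemma vfuel_ind_succ_of_lt (hP : IsAbsorbingKernel H P) (hhH : h ≤ H) (s : S) (a : A) (b : B)
    (n : ℕ) {h₀ : ℕ} (h1 : 1 ≤ h₀) (hlt : h₀ < h) (t : S) :
    Vfuel P (ind h (some s) a b) μ ν (n + 1) h₀ (some t) =
      ∑ a', ∑ b', μ h₀ (some t) a' * ν h₀ (some t) b' *
        ∑ t', P h₀ (some t) a' b' (some t') *
          Vfuel P (ind h (some s) a b) μ ν n (h₀ + 1) (some t') := by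
  simp [Vfuel, ind, hlt.ne, Fintype.sum_option,
    vfuel_ind_none hP hhH s a b n (Nat.le_succ_of_le h1)]

theorem pow_mul_vfuel_ind_le (hP : IsAbsorbingKernel H P) (hQ : IsAbsorbingKernel H Q)
    (hμ : IsPolicy H μ) (hν : IsPolicy H ν) {c : ℝ} (hc : 0 ≤ c)
    (hPQ : ∀ h' ∈ Icc 1 H, ∀ (t : S) (a' : A) (b' : B) (t' : S),
      c * P h' (some t) a' b' (some t') ≤ Q h' (some t) a' b' (some t'))
    (hhH : h ≤ H) (s : S) (a : A) (b : B) :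
    ∀ n {h₀ : ℕ}, 1 ≤ h₀ → ∀ t : S,
      c ^ (h - h₀) * Vfuel P (ind h (some s) a b) μ ν n h₀ (some t)
        ≤ Vfuel Q (ind h (some s) a b) μ ν n h₀ (some t)
  | 0, _, _, _ => by simp [Vfuel]
  | n + 1, h₀, h1, t => by
    rcases lt_trichotomy h₀ h with hlt | rfl | hgt
    · have hmem : h₀ ∈ Icc 1 H := mem_Icc.2 ⟨h1, hlt.le.trans hhH⟩
      have hpow : c ^ (h - h₀) = c * c ^ (h - (h₀ + 1)) := by
        rw [← pow_succ']; congr 1; omega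
      rw [vfuel_ind_succ_of_lt hP hhH s a b n h1 hlt, vfuel_ind_succ_of_lt hQ hhH s a b n h1 hlt,
        hpow]
      calc c * c ^ (h - (h₀ + 1)) * ∑ a', ∑ b', μ h₀ (some t) a' * ν h₀ (some t) b' *
            ∑ t', P h₀ (some t) a' b' (some t') *
              Vfuel P (ind h (some s) a b) μ ν n (h₀ + 1) (some t')
          = ∑ a', ∑ b', μ h₀ (some t) a' * ν h₀ (some t) b' *
            ∑ t', c * P h₀ (some t) a' b' (some t') *
              (c ^ (h - (h₀ + 1)) * Vfuel P (ind h (some s) a b) μ ν n (h₀ + 1) (some t')) := by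
            simp only [mul_sum]
            exact sum_congr rfl fun _ _ => sum_congr rfl fun _ _ => sum_congr rfl fun _ _ => by
              ring
        _ ≤ _ := by
            gcongr with a' _ b' _ t' _
            · exact mul_nonneg ((hμ h₀ hmem _).1 a') ((hν h₀ hmem _).1 b')
            · exact mul_nonneg (pow_nonneg hc _)
                (vfuel_ind_nonneg hP.1 hμ hν hhH n (Nat.le_succ_of_le h1) _)
            · exact (hQ.1 h₀ hmem _ a' b').1 _
            · exact hPQ h₀ hmem t a' b' t'
            · exact pow_mul_vfuel_ind_le hP hQ hμ hν hc hPQ hhH s a b n (Nat.le_succ_of_le h1) t'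
    · simp [vfuel_ind_succ_self]
    · simp [vfuel_ind_of_lt hgt]

end

lemma one_add_inv_pow_le_three {m k : ℕ} (hk : k ≤ m) : (1 + 1 / (m : ℝ)) ^ k ≤ 3 :=
  calc (1 + 1 / (m : ℝ)) ^ k ≤ (1 + (m : ℝ)⁻¹) ^ m := by
        rw [one_div]; exact pow_le_pow_right₀ (by simp) hk
    _ ≤ Real.exp 1 := Real.one_add_inv_pow_le_exp
    _ ≤ 3 := Real.exp_one_lt_three.le

lemma quarter_le_one_sub_inv_pow {H k : ℕ} (hk : k < H) : 1 / 4 ≤ (1 - 1 / (H : ℝ)) ^ k := by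
  rcases Nat.eq_zero_or_pos k with rfl | hk0
  · norm_num
  obtain ⟨m, rfl⟩ : ∃ m, H = m + 1 := ⟨H - 1, by omega⟩
  have hm : (0 : ℝ) < m := by exact_mod_cast hk0.trans_le (Nat.le_of_lt_succ hk)
  have hbase : 1 - 1 / ((m + 1 : ℕ) : ℝ) = (1 + 1 / (m : ℝ))⁻¹ := by
    push_cast; field_simp; ring
  rw [hbase, inv_pow]
  calc (1 / 4 : ℝ) ≤ 3⁻¹ := by norm_num
    _ ≤ _ := inv_anti₀ (by positivity) (one_add_inv_pow_le_three (Nat.le_of_lt_succ hk))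

theorem stmt2_general {S A B : Type*} [Fintype S] [Fintype A] [Fintype B]
    [DecidableEq S] [DecidableEq A] [DecidableEq B]
    (H : ℕ)
    (P' P'' : ℕ → Option S → A → B → Option S → ℝ)
    (hP' : IsKernel H P') (hP'' : IsKernel H P'')
    (habs' : ∀ h ∈ Finset.Icc 1 H, ∀ a b, P' h none a b none = 1)
    (habs'' : ∀ h ∈ Finset.Icc 1 H, ∀ a b, P'' h none a b none = 1)
    (hacc : ∀ h ∈ Finset.Icc 1 H, ∀ (s : S) (a : A) (b : B) (s' : S),
      (1 - 1 / (H : ℝ)) * P' h (some s) a b (some s') ≤ P'' h (some s) a b (some s') ∧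
        P'' h (some s) a b (some s') ≤ (1 + 1 / (H : ℝ)) * P' h (some s) a b (some s'))
    (μ : ℕ → Option S → A → ℝ) (ν : ℕ → Option S → B → ℝ)
    (hμ : IsPolicy H μ) (hν : IsPolicy H ν)
    (s₁ : S) (h : ℕ) (hh : h ∈ Finset.Icc 1 H) (s : S) (a : A) (b : B) :
    (1 / 4) * val H P' (ind h (some s) a b) μ ν (some s₁)
        ≤ val H P'' (ind h (some s) a b) μ ν (some s₁) ∧
      val H P'' (ind h (some s) a b) μ ν (some s₁)
        ≤ 3 * val H P' (ind h (some s) a b) μ ν (some s₁) := by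
  obtain ⟨hh1, hhH⟩ := mem_Icc.1 hh
  have hV' : 0 ≤ val H P' (ind h (some s) a b) μ ν (some s₁) :=
    vfuel_ind_nonneg hP' hμ hν hhH H le_rfl _
  have hHpos : (0 : ℝ) < H := by exact_mod_cast hh1.trans hhH
  have hlower := pow_mul_vfuel_ind_le ⟨hP', habs'⟩ ⟨hP'', habs''⟩ hμ hν
    (sub_nonneg.2 (div_le_one_of_le₀ (by exact_mod_cast hh1.trans hhH) hHpos.le))
    (fun h' hm t a' b' t' => (hacc h' hm t a' b' t').1) hhH s a b H le_rfl s₁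
  -- the upper bound is the lower comparison with the kernels swapped and `c = (1 + 1/H)⁻¹`
  have hupper := pow_mul_vfuel_ind_le ⟨hP'', habs''⟩ ⟨hP', habs'⟩ hμ hν
    (c := (1 + 1 / (H : ℝ))⁻¹) (by positivity)
    (fun h' hm t a' b' t' => by
      rw [inv_mul_le_iff₀ (by positivity)]; exact (hacc h' hm t a' b' t').2) hhH s a b H le_rfl s₁
  rw [inv_pow, inv_mul_le_iff₀ (by positivity)] at hupper
  constructor
  · calc 1 / 4 * val H P' (ind h (some s) a b) μ ν (some s₁)
        ≤ (1 - 1 / (H : ℝ)) ^ (h - 1) * val H P' (ind h (some s) a b) μ ν (some s₁) := by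
          gcongr; exact quarter_le_one_sub_inv_pow (by omega)
      _ ≤ _ := hlower
  · calc val H P'' (ind h (some s) a b) μ ν (some s₁)
        ≤ (1 + 1 / (H : ℝ)) ^ (h - 1) * val H P' (ind h (some s) a b) μ ν (some s₁) := hupper
      _ ≤ _ := by gcongr; exact one_add_inv_pow_le_three (by omega)

/-- If, on an absorbing Markov game over `𝒮 ∪ {s†}` (here `Option S`,
with `none` the absorbing state `s†`), the kernel `P'` is `(1/H)`-multiplicatively
accurate to `P''`, then for every Markov policy pair and every `(h,s,a,b)` with
`h ∈ [H]` and `s ∈ 𝒮`, the visitation probabilities satisfy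
`(1/4)·V^{μ,ν}(1_{h,s,a,b},P') ≤ V^{μ,ν}(1_{h,s,a,b},P'') ≤ 3·V^{μ,ν}(1_{h,s,a,b},P')`. -/
theorem stmt2 {S A B : Type*} [Fintype S] [Fintype A] [Fintype B]
    [DecidableEq S] [DecidableEq A] [DecidableEq B]
    (H : ℕ) (hH : 1 ≤ H)
    (P' P'' : ℕ → Option S → A → B → Option S → ℝ)
    (hP' : IsKernel H P') (hP'' : IsKernel H P'')
    (habs' : ∀ h ∈ Finset.Icc 1 H, ∀ a b, P' h none a b none = 1)
    (habs'' : ∀ h ∈ Finset.Icc 1 H, ∀ a b, P'' h none a b none = 1)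
    (hacc : ∀ h ∈ Finset.Icc 1 H, ∀ (s : S) (a : A) (b : B) (s' : S),
      (1 - 1 / (H : ℝ)) * P' h (some s) a b (some s') ≤ P'' h (some s) a b (some s') ∧
        P'' h (some s) a b (some s') ≤ (1 + 1 / (H : ℝ)) * P' h (some s) a b (some s'))
    (μ : ℕ → Option S → A → ℝ) (ν : ℕ → Option S → B → ℝ)
    (hμ : IsPolicy H μ) (hν : IsPolicy H ν)
    (s₁ : S) (h : ℕ) (hh : h ∈ Finset.Icc 1 H) (s : S) (a : A) (b : B) :
    (1 / 4) * val H P' (ind h (some s) a b) μ ν (some s₁)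
        ≤ val H P'' (ind h (some s) a b) μ ν (some s₁) ∧
      val H P'' (ind h (some s) a b) μ ν (some s₁)
        ≤ 3 * val H P' (ind h (some s) a b) μ ν (some s₁) :=
  stmt2_general H P' P'' hP' hP'' habs' habs'' hacc μ ν hμ hν s₁ h hh s a b
end

section
/- Let P be the transition kernel of a finite two-player zero-sum Markov game, let ℱ ⊆ [H] × 𝒮 × 𝒜 × ℬ × 𝒮 be any set of tuples, and let P̃ be the absorbing kernel obtained from P and ℱ. Then for every Markov policy pair (μ,ν) and every (h,s,a,b) ∈ [H] × 𝒮 × 𝒜 × ℬ, V^{μ,ν}(1_{h,s,a,b}, P) ≥ V^{μ,ν}(1_{h,s,a,b}, P̃). -/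
/-- The absorbing kernel `P̃` over the extended state space `Option S` (with `none` the
absorbing state `s†`) obtained from the kernel `P` and a set `ℱ` of infrequent tuples:
`P̃_h(s'|s,a,b) = P_h(s'|s,a,b)` for `(h,s,a,b,s') ∉ ℱ`, `P̃_h(s'|s,a,b) = 0` for
`(h,s,a,b,s') ∈ ℱ`, `P̃_h(s†|s†,a,b) = 1`, and
`P̃_h(s†|s,a,b) = 1 − ∑_{s' : (h,s,a,b,s') ∉ ℱ} P_h(s'|s,a,b)`. -/
noncomputable def absorb {S A B : Type*} [Fintype S]
    [DecidableEq S] [DecidableEq A] [DecidableEq B]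
    (P : ℕ → S → A → B → S → ℝ) (F : Finset (ℕ × S × A × B × S)) :
    ℕ → Option S → A → B → Option S → ℝ :=
  fun h x a b y =>
    match x, y with
    | some s, some s' => if (h, s, a, b, s') ∈ F then 0 else P h s a b s'
    | some s, none => 1 - ∑ s' : S, if (h, s, a, b, s') ∈ F then 0 else P h s a b s'
    | none, none => 1
    | none, some _ => 0

/-!
Couple the two games step by step: under `P̃` every transition that `P` would make either
happens with the same probability or is redirected to `s†`, where no reward is ever collected
again. Since the indicator reward is nonnegative, losing those trajectories can only decrease the
value, so by backward induction on the number of remaining steps the value-to-go under `P̃` is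
dominated by the value-to-go under `P` at every state of `𝒮`.
-/

open Finset

lemma Vfuel_nonneg {S A B : Type*} [Fintype S] [Fintype A] [Fintype B]
    {P : ℕ → S → A → B → S → ℝ} {r : ℕ → S → A → B → ℝ}
    {μ : ℕ → S → A → ℝ} {ν : ℕ → S → B → ℝ} (n h₀ : ℕ)
    (hP : ∀ k, h₀ ≤ k → k < h₀ + n → ∀ s a b s', 0 ≤ P k s a b s')
    (hμ : ∀ k, h₀ ≤ k → k < h₀ + n → ∀ s a, 0 ≤ μ k s a)
    (hν : ∀ k, h₀ ≤ k → k < h₀ + n → ∀ s b, 0 ≤ ν k s b)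
    (hr : ∀ k s a b, 0 ≤ r k s a b) (s : S) :
    0 ≤ Vfuel P r μ ν n h₀ s := by
  induction n generalizing h₀ s with
  | zero => simp [Vfuel]
  | succ n ih =>
    have ih' : ∀ s', 0 ≤ Vfuel P r μ ν n (h₀ + 1) s' :=
      ih (h₀ + 1) (fun k _ _ => hP k (by omega) (by omega))
        (fun k _ _ => hμ k (by omega) (by omega)) (fun k _ _ => hν k (by omega) (by omega))
    simp only [Vfuel]
    refine sum_nonneg fun a _ => sum_nonneg fun b _ => mul_nonneg ?_ ?_
    · exact mul_nonneg (hμ h₀ le_rfl (by omega) s a) (hν h₀ le_rfl (by omega) s b)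
    · exact add_nonneg (hr _ _ _ _) <|
        sum_nonneg fun s' _ => mul_nonneg (hP h₀ le_rfl (by omega) s a b s') (ih' s')

section Absorb

variable {S A B : Type*} [Fintype S] [DecidableEq S] [DecidableEq A] [DecidableEq B]

lemma sum_absorb_mul_le (P : ℕ → S → A → B → S → ℝ) (F : Finset (ℕ × S × A × B × S))
    (k : ℕ) (t : S) (a : A) (b : B) (hP : ∀ s', 0 ≤ P k t a b s')
    {W : Option S → ℝ} {V : S → ℝ} (hW : W none = 0) (hWV : ∀ s', W (some s') ≤ V s')
    (hV : ∀ s', 0 ≤ V s') :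
    ∑ o, absorb P F k (some t) a b o * W o ≤ ∑ s', P k t a b s' * V s' := by
  rw [Fintype.sum_option, hW, mul_zero, zero_add]
  refine sum_le_sum fun s' _ => ?_
  by_cases hF : (k, t, a, b, s') ∈ F
  · simpa [absorb, hF] using mul_nonneg (hP s') (hV s')
  · simpa [absorb, hF] using mul_le_mul_of_nonneg_left (hWV s') (hP s')

variable [Fintype A] [Fintype B]

lemma Vfuel_absorb_none (P : ℕ → S → A → B → S → ℝ) (F : Finset (ℕ × S × A × B × S))
    {r : ℕ → Option S → A → B → ℝ} (hr : ∀ k a b, r k none a b = 0)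
    (μ : ℕ → Option S → A → ℝ) (ν : ℕ → Option S → B → ℝ) (n h₀ : ℕ) :
    Vfuel (absorb P F) r μ ν n h₀ none = 0 := by
  induction n generalizing h₀ with
  | zero => rfl
  | succ n ih => simp [Vfuel, absorb, Fintype.sum_option, hr, ih]

lemma Vfuel_absorb_le (P : ℕ → S → A → B → S → ℝ) (F : Finset (ℕ × S × A × B × S))
    {r : ℕ → S → A → B → ℝ} {r' : ℕ → Option S → A → B → ℝ}
    (hr : ∀ k s a b, 0 ≤ r k s a b) (hr'_some : ∀ k s a b, r' k (some s) a b = r k s a b)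
    (hr'_none : ∀ k a b, r' k none a b = 0)
    (μ : ℕ → Option S → A → ℝ) (ν : ℕ → Option S → B → ℝ) (n h₀ : ℕ)
    (hP : ∀ k, h₀ ≤ k → k < h₀ + n → ∀ s a b s', 0 ≤ P k s a b s')
    (hμ : ∀ k, h₀ ≤ k → k < h₀ + n → ∀ s a, 0 ≤ μ k (some s) a)
    (hν : ∀ k, h₀ ≤ k → k < h₀ + n → ∀ s b, 0 ≤ ν k (some s) b) (t : S) :
    Vfuel (absorb P F) r' μ ν n h₀ (some t)
      ≤ Vfuel P r (fun k s => μ k (some s)) (fun k s => ν k (some s)) n h₀ t := by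
  induction n generalizing h₀ t with
  | zero => rfl
  | succ n ih =>
    have ih' := ih (h₀ + 1) (fun k _ _ => hP k (by omega) (by omega))
      (fun k _ _ => hμ k (by omega) (by omega)) (fun k _ _ => hν k (by omega) (by omega))
    have hV := Vfuel_nonneg (r := r) (μ := fun k s => μ k (some s))
      (ν := fun k s => ν k (some s)) n (h₀ + 1) (fun k _ _ => hP k (by omega) (by omega))
      (fun k _ _ => hμ k (by omega) (by omega)) (fun k _ _ => hν k (by omega) (by omega)) hr
    simp only [Vfuel]
    refine sum_le_sum fun a _ => sum_le_sum fun b _ => mul_le_mul_of_nonneg_left ?_ ?_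
    · rw [hr'_some]
      exact add_le_add_right (sum_absorb_mul_le P F h₀ t a b (hP h₀ le_rfl (by omega) t a b)
        (Vfuel_absorb_none P F hr'_none μ ν n (h₀ + 1)) ih' hV) _
    · exact mul_nonneg (hμ h₀ le_rfl (by omega) t a) (hν h₀ le_rfl (by omega) t b)

end Absorb

theorem stmt3_general {S A B : Type*} [Fintype S] [Fintype A] [Fintype B]
    [DecidableEq S] [DecidableEq A] [DecidableEq B]
    (H : ℕ)
    (P : ℕ → S → A → B → S → ℝ) (hP : IsKernel H P)
    (F : Finset (ℕ × S × A × B × S))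
    (μ : ℕ → Option S → A → ℝ) (ν : ℕ → Option S → B → ℝ)
    (hμ : IsPolicy H μ) (hν : IsPolicy H ν)
    (s₁ : S) (h : ℕ) (s : S) (a : A) (b : B) :
    val H (absorb P F) (ind h (some s) a b) μ ν (some s₁)
      ≤ val H P (ind h s a b)
          (fun h' s' => μ h' (some s')) (fun h' s' => ν h' (some s')) s₁ := by
  have step_mem : ∀ k, 1 ≤ k → k < 1 + H → k ∈ Icc 1 H :=
    fun k h₁ h₂ => mem_Icc.2 ⟨h₁, by omega⟩
  refine Vfuel_absorb_le P F (fun _ _ _ _ => by unfold ind; positivity)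
    (fun _ _ _ _ => by simp [ind]) (fun _ _ _ => by simp [ind]) μ ν H 1 ?_ ?_ ?_ s₁
  · exact fun k h₁ h₂ s a b => (hP k (step_mem k h₁ h₂) s a b).1
  · exact fun k h₁ h₂ s => (hμ k (step_mem k h₁ h₂) (some s)).1
  · exact fun k h₁ h₂ s => (hν k (step_mem k h₁ h₂) (some s)).1

/-- For any set `ℱ` of tuples, the visitation probability of any
`(h,s,a,b)` (with `h ∈ [H]`, `s ∈ 𝒮`) under the original kernel `P` is at least its
visitation probability under the absorbing kernel `P̃` obtained from `P` and `ℱ`,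
for every Markov policy pair (given on the extended state space and restricted to `𝒮`
for the original game). -/
theorem stmt3 {S A B : Type*} [Fintype S] [Fintype A] [Fintype B]
    [DecidableEq S] [DecidableEq A] [DecidableEq B]
    (H : ℕ) (hH : 1 ≤ H)
    (P : ℕ → S → A → B → S → ℝ) (hP : IsKernel H P)
    (F : Finset (ℕ × S × A × B × S))
    (μ : ℕ → Option S → A → ℝ) (ν : ℕ → Option S → B → ℝ)
    (hμ : IsPolicy H μ) (hν : IsPolicy H ν)
    (s₁ : S) (h : ℕ) (hh : h ∈ Finset.Icc 1 H) (s : S) (a : A) (b : B) :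
    val H (absorb P F) (ind h (some s) a b) μ ν (some s₁)
      ≤ val H P (ind h s a b)
          (fun h' s' => μ h' (some s')) (fun h' s' => ν h' (some s')) s₁ :=
  stmt3_general H P hP F μ ν hμ hν s₁ h s a b
end

section
/- (Law-of-total-variance bound) Consider a finite two-player zero-sum Markov game with horizon H, transition kernel P, rewards r_h(s,a,b) ∈ [0,1], and a Markov policy pair (μ,ν). Let f_{H+1} ≡ 0 and let f_h = V_h^{μ,ν} be the reward-to-go value functions of (μ,ν) under (r,P), and let d_h(s,a,b) = V^{μ,ν}(1_{h,s,a,b},P) be the occupancy probabilities. Then ∑_{h=1}^H ∑_{s,a,b} d_h(s,a,b) · Var_{s' ∼ P_h(·|s,a,b)}( f_{h+1}(s') ) ≤ H². -/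
/-- The variance `Var_{s' ∼ p}(f)` of `f(s')` when `s'` is drawn from the (finitely
supported) distribution `p`. -/
noncomputable def varDist {S : Type*} [Fintype S] (p : S → ℝ) (f : S → ℝ) : ℝ :=
  ∑ s', p s' * f s' ^ 2 - (∑ s', p s' * f s') ^ 2

/-!
Write `f_h` for the value functions and `D_h = 𝔼[f_h(s_h)²]`. Since
`f_h(s) = 𝔼_{a,b}[r_h + P_h f_{h+1}]` with `r_h ∈ [0,1]` and `P_h f_{h+1} ∈ [0, H-h]`,
Jensen's inequality gives `f_h(s)² ≤ 𝔼_{a,b}[(P_h f_{h+1})²] + 2(H-h) + 1`. Hence the expected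
variance at step `h`, namely `D_{h+1} - 𝔼[(P_h f_{h+1})²]`, is at most `D_{h+1} - D_h + 2(H-h) + 1`.
Summing over `h`, the `D`'s telescope (`D_{H+1} = 0`, `D_1 ≥ 0`) and `∑_h (2(H-h) + 1) = H²`.
-/

open Finset Matrix

section ProductWeights

variable {ι κ : Type*} [Fintype ι] [Fintype κ] {p : ι → ℝ} {q : κ → ℝ}

lemma prod_weights_nonneg_and_sum_eq_one (hp : (∀ i, 0 ≤ p i) ∧ ∑ i, p i = 1)
    (hq : (∀ j, 0 ≤ q j) ∧ ∑ j, q j = 1) :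
    (∀ ij : ι × κ, 0 ≤ p ij.1 * q ij.2) ∧ ∑ ij : ι × κ, p ij.1 * q ij.2 = 1 :=
  ⟨fun ij => mul_nonneg (hp.1 _) (hq.1 _), by
    rw [Fintype.sum_prod_type, ← sum_mul_sum, hp.2, hq.2, one_mul]⟩

lemma sum_sum_mul_mul_eq_sum_prod (x : ι → κ → ℝ) :
    ∑ i, ∑ j, p i * q j * x i j = ∑ ij : ι × κ, (p ij.1 * q ij.2) • x ij.1 ij.2 := by
  simp [Fintype.sum_prod_type]

lemma Convex.sum_sum_mul_mul_mem {C : Set ℝ} (hC : Convex ℝ C)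
    (hp : (∀ i, 0 ≤ p i) ∧ ∑ i, p i = 1) (hq : (∀ j, 0 ≤ q j) ∧ ∑ j, q j = 1)
    {x : ι → κ → ℝ} (hx : ∀ i j, x i j ∈ C) : ∑ i, ∑ j, p i * q j * x i j ∈ C := by
  obtain ⟨hw0, hw1⟩ := prod_weights_nonneg_and_sum_eq_one hp hq
  rw [sum_sum_mul_mul_eq_sum_prod]
  exact hC.sum_mem (fun ij _ => hw0 ij) hw1 fun ij _ => hx ij.1 ij.2

lemma sq_sum_sum_mul_mul_le (hp : (∀ i, 0 ≤ p i) ∧ ∑ i, p i = 1)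
    (hq : (∀ j, 0 ≤ q j) ∧ ∑ j, q j = 1) (x : ι → κ → ℝ) :
    (∑ i, ∑ j, p i * q j * x i j) ^ 2 ≤ ∑ i, ∑ j, p i * q j * x i j ^ 2 := by
  obtain ⟨hw0, hw1⟩ := prod_weights_nonneg_and_sum_eq_one hp hq
  rw [sum_sum_mul_mul_eq_sum_prod, sum_sum_mul_mul_eq_sum_prod]
  exact (even_two.convexOn_pow).map_sum_le (fun ij _ => hw0 ij) hw1 fun _ _ => Set.mem_univ _

end ProductWeights

lemma sum_range_two_mul_sub_add_one (n : ℕ) :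
    ∑ i ∈ range n, (2 * (n - (i + 1)) + 1) = n ^ 2 := by
  induction n with
  | zero => simp
  | succ n ih =>
    rw [sum_range_succ']
    simp only [Nat.add_sub_add_right, Nat.sub_zero, ih]
    ring

section MarkovGame

variable {S A B : Type*} [Fintype S] [Fintype A] [Fintype B]
  (P : ℕ → S → A → B → S → ℝ) (μ : ℕ → S → A → ℝ) (ν : ℕ → S → B → ℝ)

noncomputable def transMatrix (g : ℕ) : Matrix S S ℝ :=
  of fun s t => ∑ a, ∑ b, μ g s a * ν g s b * P g s a b t

/-- `occupancy m g s t` is the probability of being in state `t` at step `g + m` when starting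
in state `s` at step `g`. -/
noncomputable def occupancy [DecidableEq S] : ℕ → ℕ → Matrix S S ℝ
  | 0, _ => 1
  | m + 1, g => transMatrix P μ ν g * occupancy m (g + 1)

variable {P μ ν}

lemma transMatrix_mulVec (g : ℕ) (f : S → ℝ) (s : S) :
    (transMatrix P μ ν g *ᵥ f) s = ∑ a, ∑ b, μ g s a * ν g s b * ∑ t, P g s a b t * f t := by
  simp only [transMatrix, mulVec, dotProduct, of_apply, sum_mul, mul_sum, mul_assoc]
  rw [sum_comm]
  refine sum_congr rfl fun a _ => ?_
  rw [sum_comm]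

lemma occupancy_succ' [DecidableEq S] (m g : ℕ) :
    occupancy P μ ν (m + 1) g = occupancy P μ ν m g * transMatrix P μ ν (g + m) := by
  induction m generalizing g with
  | zero => simp [occupancy]
  | succ m ih =>
    rw [occupancy, ih, occupancy, Matrix.mul_assoc, add_right_comm, add_assoc]

variable {H : ℕ}

lemma transMatrix_mem_rowStochastic [DecidableEq S] (hP : IsKernel H P) (hμ : IsPolicy H μ)
    (hν : IsPolicy H ν) {g : ℕ} (hg : g ∈ Icc 1 H) : transMatrix P μ ν g ∈ rowStochastic ℝ S := by
  refine mem_rowStochastic_iff_sum.2 ⟨fun s t => ?_, fun s => ?_⟩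
  · exact Convex.sum_sum_mul_mul_mem (convex_Ici (0 : ℝ)) (hμ g hg s) (hν g hg s)
      fun a b => (hP g hg s a b).1 t
  · have hrow := transMatrix_mulVec (P := P) (μ := μ) (ν := ν) g (fun _ => 1) s
    simp only [mul_one, (hP g hg _ _ _).2, ← sum_mul_sum, (hμ g hg s).2, (hν g hg s).2] at hrow
    simpa [mulVec, dotProduct] using hrow

lemma occupancy_mem_rowStochastic [DecidableEq S] (hP : IsKernel H P) (hμ : IsPolicy H μ)
    (hν : IsPolicy H ν) {m g : ℕ} (hg : 1 ≤ g) (hgm : g + m ≤ H + 1) :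
    occupancy P μ ν m g ∈ rowStochastic ℝ S := by
  induction m generalizing g with
  | zero => exact one_mem _
  | succ m ih =>
    exact mul_mem (transMatrix_mem_rowStochastic hP hμ hν (mem_Icc.2 ⟨hg, by omega⟩))
      (ih (by omega) (by omega))

variable {r : ℕ → S → A → B → ℝ}

lemma Vfuel_mem_Icc (hP : IsKernel H P) (hμ : IsPolicy H μ) (hν : IsPolicy H ν)
    (hr : ∀ h ∈ Icc 1 H, ∀ s a b, 0 ≤ r h s a b ∧ r h s a b ≤ 1) {n g : ℕ} (hg : 1 ≤ g)
    (hgn : g + n ≤ H + 1) (s : S) : Vfuel P r μ ν n g s ∈ Set.Icc 0 (n : ℝ) := by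
  induction n generalizing g s with
  | zero => simp [Vfuel]
  | succ n ih =>
    have hgH : g ∈ Icc 1 H := mem_Icc.2 ⟨hg, by omega⟩
    refine Convex.sum_sum_mul_mul_mem (convex_Icc _ _) (hμ g hgH s) (hν g hgH s) fun a b => ?_
    have hnext : ∑ s', P g s a b s' * Vfuel P r μ ν n (g + 1) s' ∈ Set.Icc 0 (n : ℝ) := by
      simpa using (convex_Icc _ _).sum_mem (fun s' _ => (hP g hgH s a b).1 s')
        (hP g hgH s a b).2 fun s' _ => ih (by omega) (by omega) s'
    obtain ⟨hr0, hr1⟩ := hr g hgH s a b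
    push_cast
    constructor <;> linarith [hnext.1, hnext.2]

lemma Vfuel_eq_zero_of_forall_le {g : ℕ} (hr : ∀ h, g ≤ h → r h = 0) (n : ℕ) (s : S) :
    Vfuel P r μ ν n g s = 0 := by
  induction n generalizing g s with
  | zero => rfl
  | succ n ih =>
    have hlater := ih (g := g + 1) fun h hh => hr h (by omega)
    simp [Vfuel, hr g le_rfl, hlater]

lemma Vfuel_ind [DecidableEq S] [DecidableEq A] [DecidableEq B] {m n : ℕ} (hmn : m < n)
    (g : ℕ) (s₀ s : S) (a : A) (b : B) :
    Vfuel P (ind (g + m) s a b) μ ν n g s₀ =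
      occupancy P μ ν m g s₀ s * μ (g + m) s a * ν (g + m) s b := by
  obtain ⟨n, rfl⟩ : ∃ k, n = k + 1 := ⟨n - 1, by omega⟩
  induction m generalizing g n s₀ with
  | zero =>
    have hlater : ∀ s', Vfuel P (ind g s a b) μ ν n (g + 1) s' = 0 :=
      Vfuel_eq_zero_of_forall_le (fun h hh => by ext; simp [ind, show h ≠ g by omega]) n
    by_cases hs : s₀ = s
    · subst hs
      simp [Vfuel, hlater, ind, occupancy, mul_ite, ite_and, sum_ite_eq', mul_comm]
    · simp [Vfuel, hlater, ind, occupancy, hs]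
  | succ m ih =>
    obtain ⟨k, rfl⟩ : ∃ k, n = k + 1 := ⟨n - 1, by omega⟩
    have hnow : ∀ a' b', ind (g + (m + 1)) s a b g s₀ a' b' = 0 := fun a' b' => by
      simp [ind]
    have hlater : ∀ s', Vfuel P (ind (g + (m + 1)) s a b) μ ν (k + 1) (g + 1) s' =
        occupancy P μ ν m (g + 1) s' s * μ (g + (m + 1)) s a * ν (g + (m + 1)) s b := by
      rw [show g + (m + 1) = g + 1 + m by omega]
      exact fun s' => ih (g + 1) s' k (by omega)
    have hstep := transMatrix_mulVec (P := P) (μ := μ) (ν := ν) g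
      (fun t => occupancy P μ ν m (g + 1) t s * μ (g + (m + 1)) s a * ν (g + (m + 1)) s b) s₀
    rw [Vfuel]
    simp only [hnow, hlater, zero_add]
    rw [← hstep]
    simp only [occupancy, mul_apply, mulVec, dotProduct, sum_mul, mul_assoc]

lemma sq_Vfuel_succ_le (hP : IsKernel H P) (hμ : IsPolicy H μ) (hν : IsPolicy H ν)
    (hr : ∀ h ∈ Icc 1 H, ∀ s a b, 0 ≤ r h s a b ∧ r h s a b ≤ 1) {n g : ℕ} (hg : 1 ≤ g)
    (hgn : g + (n + 1) ≤ H + 1) (s : S) :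
    Vfuel P r μ ν (n + 1) g s ^ 2 ≤
      ∑ a, ∑ b, μ g s a * ν g s b * (∑ s', P g s a b s' * Vfuel P r μ ν n (g + 1) s') ^ 2
        + (2 * n + 1) := by
  have hgH : g ∈ Icc 1 H := mem_Icc.2 ⟨hg, by omega⟩
  set q : A → B → ℝ := fun a b => ∑ s', P g s a b s' * Vfuel P r μ ν n (g + 1) s'
  have hq (a : A) (b : B) : q a b ∈ Set.Icc 0 (n : ℝ) := by
    simpa using (convex_Icc _ _).sum_mem (fun s' _ => (hP g hgH s a b).1 s')
      (hP g hgH s a b).2 fun s' _ => Vfuel_mem_Icc hP hμ hν hr (by omega) (by omega) s'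
  -- `(r + q)² - q² = r (r + 2q) ≤ 2n + 1` since `r ∈ [0, 1]` and `q ∈ [0, n]`
  have hpoint (a : A) (b : B) : (r g s a b + q a b) ^ 2 ≤ q a b ^ 2 + (2 * n + 1) := by
    obtain ⟨hr0, hr1⟩ := hr g hgH s a b
    nlinarith [(hq a b).1, (hq a b).2]
  have hw (a : A) (b : B) : 0 ≤ μ g s a * ν g s b :=
    mul_nonneg ((hμ g hgH s).1 a) ((hν g hgH s).1 b)
  calc Vfuel P r μ ν (n + 1) g s ^ 2
      = (∑ a, ∑ b, μ g s a * ν g s b * (r g s a b + q a b)) ^ 2 := rfl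
    _ ≤ ∑ a, ∑ b, μ g s a * ν g s b * (r g s a b + q a b) ^ 2 :=
      sq_sum_sum_mul_mul_le (hμ g hgH s) (hν g hgH s) _
    _ ≤ ∑ a, ∑ b, μ g s a * ν g s b * (q a b ^ 2 + (2 * n + 1)) := by
      gcongr with a _ b _
      exacts [hw a b, hpoint a b]
    _ = ∑ a, ∑ b, μ g s a * ν g s b * q a b ^ 2 + (2 * n + 1) := by
      simp only [mul_add, sum_add_distrib, ← sum_mul, ← sum_mul_sum, (hμ g hgH s).2,
        (hν g hgH s).2, one_mul]

lemma sum_mul_varDist_le (hP : IsKernel H P) (hμ : IsPolicy H μ) (hν : IsPolicy H ν)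
    (hr : ∀ h ∈ Icc 1 H, ∀ s a b, 0 ≤ r h s a b ∧ r h s a b ≤ 1) {n g : ℕ} (hg : 1 ≤ g)
    (hgn : g + (n + 1) ≤ H + 1) {ρ : S → ℝ} (hρ0 : ∀ s, 0 ≤ ρ s) (hρ1 : ∑ s, ρ s = 1) :
    ∑ s, ∑ a, ∑ b, ρ s * μ g s a * ν g s b * varDist (P g s a b) (Vfuel P r μ ν n (g + 1))
      ≤ (ρ ᵥ* transMatrix P μ ν g) ⬝ᵥ (fun t => Vfuel P r μ ν n (g + 1) t ^ 2)
        - ρ ⬝ᵥ (fun s => Vfuel P r μ ν (n + 1) g s ^ 2) + (2 * n + 1) := by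
  set f := Vfuel P r μ ν n (g + 1)
  calc ∑ s, ∑ a, ∑ b, ρ s * μ g s a * ν g s b * varDist (P g s a b) f
      = ∑ s, ρ s * ((transMatrix P μ ν g *ᵥ fun t => f t ^ 2) s
          - ∑ a, ∑ b, μ g s a * ν g s b * (∑ t, P g s a b t * f t) ^ 2) := by
        simp only [transMatrix_mulVec, varDist, mul_sub, sum_sub_distrib, mul_sum, mul_assoc]
    _ ≤ ∑ s, ρ s * ((transMatrix P μ ν g *ᵥ fun t => f t ^ 2) s
          - Vfuel P r μ ν (n + 1) g s ^ 2 + (2 * n + 1)) := by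
        gcongr with s _
        · exact hρ0 s
        · linarith [sq_Vfuel_succ_le hP hμ hν hr hg hgn s]
    _ = _ := by
        simp only [mul_add, mul_sub, sum_add_distrib, sum_sub_distrib, ← sum_mul, hρ1, one_mul,
          ← dotProduct_mulVec]
        rfl

lemma val_ind [DecidableEq S] [DecidableEq A] [DecidableEq B] {h : ℕ} (hh : h ∈ Icc 1 H)
    (s₁ s : S) (a : A) (b : B) :
    val H P (ind h s a b) μ ν s₁ = occupancy P μ ν (h - 1) 1 s₁ s * μ h s a * ν h s b := by
  obtain ⟨hh1, hhH⟩ := mem_Icc.1 hh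
  obtain ⟨m, rfl⟩ : ∃ m, h = 1 + m := ⟨h - 1, by omega⟩
  rw [Nat.add_sub_cancel_left]
  exact Vfuel_ind (P := P) (μ := μ) (ν := ν) (m := m) (n := H) (by omega) 1 s₁ s a b

/-- `valueSecondMoment P r μ ν H s₁ j = 𝔼[f_{j+1}(s_{j+1})²]`. -/
noncomputable def valueSecondMoment [DecidableEq S] (P : ℕ → S → A → B → S → ℝ)
    (r : ℕ → S → A → B → ℝ) (μ : ℕ → S → A → ℝ) (ν : ℕ → S → B → ℝ) (H : ℕ) (s₁ : S)
    (j : ℕ) : ℝ :=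
  ∑ t, occupancy P μ ν j 1 s₁ t * Vfuel P r μ ν (H - j) (j + 1) t ^ 2

lemma sum_occupancy_mul_varDist_le [DecidableEq S] (hP : IsKernel H P) (hμ : IsPolicy H μ)
    (hν : IsPolicy H ν) (hr : ∀ h ∈ Icc 1 H, ∀ s a b, 0 ≤ r h s a b ∧ r h s a b ≤ 1) (s₁ : S)
    {i : ℕ} (hi : i < H) :
    ∑ s, ∑ a, ∑ b, occupancy P μ ν i 1 s₁ s * μ (i + 1) s a * ν (i + 1) s b *
        varDist (P (i + 1) s a b) (fun s' => Vfuel P r μ ν (H - (i + 1)) (i + 1 + 1) s')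
      ≤ valueSecondMoment P r μ ν H s₁ (i + 1) - valueSecondMoment P r μ ν H s₁ i
        + ((2 * (H - (i + 1)) + 1 : ℕ) : ℝ) := by
  have hocc := occupancy_mem_rowStochastic hP hμ hν (m := i) le_rfl (by omega)
  have hrow : occupancy P μ ν (i + 1) 1 s₁ =
      occupancy P μ ν i 1 s₁ ᵥ* transMatrix P μ ν (i + 1) := by
    rw [occupancy_succ', add_comm 1 i]
    rfl
  obtain ⟨n, hn⟩ : ∃ n, H - i = n + 1 := ⟨H - (i + 1), by omega⟩
  have := sum_mul_varDist_le hP hμ hν hr (n := n) (g := i + 1) (by omega) (by omega)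
    (fun s => nonneg_of_mem_rowStochastic hocc) (sum_row_of_mem_rowStochastic hocc s₁)
  rw [valueSecondMoment, valueSecondMoment, hrow, hn, show H - (i + 1) = n by omega]
  push_cast
  exact this

end MarkovGame

theorem stmt6_general {S A B : Type*} [Fintype S] [Fintype A] [Fintype B]
    [DecidableEq S] [DecidableEq A] [DecidableEq B]
    (H : ℕ)
    (P : ℕ → S → A → B → S → ℝ) (hP : IsKernel H P)
    (r : ℕ → S → A → B → ℝ)
    (hr : ∀ h ∈ Finset.Icc 1 H, ∀ s a b, 0 ≤ r h s a b ∧ r h s a b ≤ 1)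
    (μ : ℕ → S → A → ℝ) (ν : ℕ → S → B → ℝ)
    (hμ : IsPolicy H μ) (hν : IsPolicy H ν) (s₁ : S) :
    ∑ h ∈ Finset.Icc 1 H, ∑ s : S, ∑ a : A, ∑ b : B,
        val H P (ind h s a b) μ ν s₁ *
          varDist (P h s a b) (fun s' => Vfuel P r μ ν (H - h) (h + 1) s')
      ≤ (H : ℝ) ^ 2 := by
  set D := valueSecondMoment P r μ ν H s₁
  have hDH : D H = 0 := by simp [D, valueSecondMoment, Vfuel]
  have hD0 : 0 ≤ D 0 := sum_nonneg fun t _ =>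
    mul_nonneg (nonneg_of_mem_rowStochastic (occupancy_mem_rowStochastic hP hμ hν le_rfl
      (by omega))) (sq_nonneg _)
  calc _ = ∑ i ∈ range H, ∑ s : S, ∑ a : A, ∑ b : B,
        occupancy P μ ν i 1 s₁ s * μ (i + 1) s a * ν (i + 1) s b *
          varDist (P (i + 1) s a b) (fun s' => Vfuel P r μ ν (H - (i + 1)) (i + 1 + 1) s') := by
        rw [← Ico_add_one_right_eq_Icc, sum_Ico_eq_sum_range, Nat.add_sub_cancel]
        refine sum_congr rfl fun i hi => ?_
        have hi' : i + 1 ∈ Icc 1 H := mem_Icc.2 ⟨by omega, mem_range.1 hi⟩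
        simp only [add_comm 1 i, val_ind hi', Nat.add_sub_cancel]
    _ ≤ ∑ i ∈ range H, (D (i + 1) - D i + ((2 * (H - (i + 1)) + 1 : ℕ) : ℝ)) :=
        sum_le_sum fun i hi => sum_occupancy_mul_varDist_le hP hμ hν hr s₁ (mem_range.1 hi)
    _ = D H - D 0 + (H : ℝ) ^ 2 := by
        rw [sum_add_distrib, sum_range_sub, ← Nat.cast_sum, sum_range_two_mul_sub_add_one]
        push_cast
        ring
    _ ≤ (H : ℝ) ^ 2 := by linarith

/-- (Law-of-total-variance bound.) For a Markov game with horizon `H`,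
kernel `P`, rewards in `[0,1]` and a Markov policy pair `(μ,ν)`, with reward-to-go value
functions `f_{h+1} = V^{μ,ν}_{h+1}` (here `Vfuel P r μ ν (H−h) (h+1)`) and occupancy
probabilities `d_h(s,a,b) = V^{μ,ν}(1_{h,s,a,b},P)`:
`∑_{h=1}^H ∑_{s,a,b} d_h(s,a,b) · Var_{s' ∼ P_h(·|s,a,b)}(f_{h+1}(s')) ≤ H²`. -/
theorem stmt6 {S A B : Type*} [Fintype S] [Fintype A] [Fintype B]
    [DecidableEq S] [DecidableEq A] [DecidableEq B]
    (H : ℕ) (hH : 1 ≤ H)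
    (P : ℕ → S → A → B → S → ℝ) (hP : IsKernel H P)
    (r : ℕ → S → A → B → ℝ)
    (hr : ∀ h ∈ Finset.Icc 1 H, ∀ s a b, 0 ≤ r h s a b ∧ r h s a b ≤ 1)
    (μ : ℕ → S → A → ℝ) (ν : ℕ → S → B → ℝ)
    (hμ : IsPolicy H μ) (hν : IsPolicy H ν) (s₁ : S) :
    ∑ h ∈ Finset.Icc 1 H, ∑ s : S, ∑ a : A, ∑ b : B,
        val H P (ind h s a b) μ ν s₁ *
          varDist (P h s a b) (fun s' => Vfuel P r μ ν (H - h) (h + 1) s')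
      ≤ (H : ℝ) ^ 2 :=
  stmt6_general H P hP r hr μ ν hμ hν s₁
end

section
/- Let (F_i)_{i≥0} be a filtration and let X_1, X_2, … be a sequence of Bernoulli ({0,1}-valued) random variables with ℙ(X_i = 1 | F_{i−1}) = P_i, where each P_i is F_{i−1}-measurable and each X_i is F_i-measurable. Then for every real W, ℙ[ ∃ n ≥ 1 : ∑_{t=1}^n X_t < (1/2)·∑_{t=1}^n P_t − W ] ≤ e^{−W}. -/
/-!
Since `X ∈ {0, 1}`, `e^{-X} = 1 - (1 - e⁻¹) X` is affine in `X`, so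
`𝔼[e^{P/2 - X} | F] = e^{P/2} (1 - (1 - e⁻¹) P) ≤ e^{P/2 - (1 - e⁻¹) P} ≤ 1` because
`1 - e⁻¹ ≥ 1/2`. Hence `M n = exp (½ ∑ P - ∑ X)` is a nonnegative supermartingale with
`M 0 = 1`, and the event is contained in `{∃ n, e^W ≤ M n}`. Ville's inequality, obtained from
optional stopping at the first time `M` enters `[e^W, ∞)`, bounds its probability by `e^{-W}`.
-/

open ProbabilityTheory

namespace MeasureTheory

section Ville

variable {Ω : Type*} {m0 : MeasurableSpace Ω} {μ : Measure Ω} [IsFiniteMeasure μ]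
  {𝒢 : Filtration ℕ m0} {f : ℕ → Ω → ℝ}

theorem Supermartingale.expected_stoppedValue_le (hf : Supermartingale f 𝒢 μ)
    {τ π : Ω → WithTop ℕ} (hτ : IsStoppingTime 𝒢 τ) (hπ : IsStoppingTime 𝒢 π) (hle : τ ≤ π)
    {N : ℕ} (hbdd : ∀ ω, π ω ≤ N) : μ[stoppedValue f π] ≤ μ[stoppedValue f τ] := by
  have h := hf.neg.expected_stoppedValue_mono hτ hπ hle hbdd
  rwa [show stoppedValue (-f) τ = -stoppedValue f τ from rfl,
    show stoppedValue (-f) π = -stoppedValue f π from rfl, integral_neg', integral_neg',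
    neg_le_neg_iff] at h

theorem Supermartingale.ville_ineq_finite (hf : Supermartingale f 𝒢 μ) (hnonneg : 0 ≤ f)
    {ε : ℝ} (hε : 0 < ε) (n : ℕ) :
    μ {ω | ∃ k ≤ n, ε ≤ f k ω} ≤ ENNReal.ofReal (μ[f 0] / ε) := by
  set τ : Ω → WithTop ℕ := fun ω ↦ (hittingBtwn f (Set.Ici ε) 0 n ω : ℕ)
  have hτ : IsStoppingTime 𝒢 τ :=
    hf.stronglyAdapted.adapted.isStoppingTime_hittingBtwn measurableSet_Ici
  have hτ_le : ∀ ω, τ ω ≤ n := fun ω ↦ WithTop.coe_le_coe.2 (hittingBtwn_le ω)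
  have hint : Integrable (stoppedValue f τ) μ := integrable_stoppedValue ℕ hτ hf.integrable hτ_le
  have hmeas : MeasurableSet {ω | ∃ k ≤ n, ε ≤ f k ω} := by
    have hfm : ∀ k, Measurable (f k) := fun k ↦ (hf.stronglyMeasurable k).measurable.le (𝒢.le k)
    simp only [Set.ofPred_exists, Set.ofPred_and]
    exact .iUnion fun k ↦ .inter (.const _) (measurableSet_le measurable_const (hfm k))
  have hge : ∀ ω ∈ {ω | ∃ k ≤ n, ε ≤ f k ω}, ε ≤ stoppedValue f τ ω := fun ω ⟨k, hk, hfk⟩ ↦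
    stoppedValue_hittingBtwn_mem ⟨k, ⟨k.zero_le, hk⟩, hfk⟩
  have key : ε * μ.real {ω | ∃ k ≤ n, ε ≤ f k ω} ≤ μ[f 0] := calc
    _ ≤ ∫ ω in {ω | ∃ k ≤ n, ε ≤ f k ω}, stoppedValue f τ ω ∂μ :=
      setIntegral_ge_of_const_le_real hmeas (measure_ne_top _ _) hge hint.integrableOn
    _ ≤ μ[stoppedValue f τ] := setIntegral_le_integral hint (ae_of_all _ fun ω ↦ hnonneg _ _)
    _ ≤ μ[f 0] := hf.expected_stoppedValue_le (isStoppingTime_const 𝒢 0) hτ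
        (fun ω ↦ bot_le) hτ_le
  rw [← ofReal_measureReal (measure_ne_top _ _)]
  exact ENNReal.ofReal_le_ofReal ((le_div_iff₀' hε).2 key)

theorem Supermartingale.ville_ineq (hf : Supermartingale f 𝒢 μ) (hnonneg : 0 ≤ f)
    {ε : ℝ} (hε : 0 < ε) :
    μ {ω | ∃ n, ε ≤ f n ω} ≤ ENNReal.ofReal (μ[f 0] / ε) := by
  have h : {ω | ∃ n, ε ≤ f n ω} = ⋃ n, {ω | ε ≤ f n ω} := by ext; simp
  rw [h, measure_iUnion_eq_iSup_accumulate]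
  refine iSup_le fun n ↦ le_of_eq_of_le ?_ (hf.ville_ineq_finite hnonneg hε n)
  congr 1
  ext
  simp [Set.mem_accumulate]

end Ville

section Bernoulli

variable {Ω : Type*} {m0 : MeasurableSpace Ω} {μ : Measure Ω} {m : MeasurableSpace Ω}

theorem condExp_mem_Icc_zero_one {X : Ω → ℝ} (hX : ∀ ω, X ω ∈ Set.Icc 0 1) :
    ∀ᵐ ω ∂μ, μ[X|m] ω ∈ Set.Icc 0 1 := by
  have hbdd : ∀ᵐ ω ∂μ, |(μ[X|m]) ω| ≤ 1 := ae_bdd_abs_condExp_of_ae_bdd_abs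
    (ae_of_all _ fun ω ↦ abs_le.2 ⟨by linarith [(hX ω).1], (hX ω).2⟩)
  filter_upwards [condExp_nonneg (ae_of_all _ fun ω ↦ (hX ω).1), hbdd] with ω h0 h1
  exact ⟨h0, (abs_le.1 h1).2⟩

theorem condExp_exp_neg_ae_eq [IsFiniteMeasure μ] (hm : m ≤ m0) {X : Ω → ℝ}
    (hX01 : ∀ ω, X ω = 0 ∨ X ω = 1) (hX : Integrable X μ) :
    μ[fun ω ↦ Real.exp (-X ω)|m] =ᵐ[μ] fun ω ↦ 1 - (1 - Real.exp (-1)) * μ[X|m] ω := by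
  have h : (fun ω ↦ Real.exp (-X ω)) = (fun _ ↦ 1) - (1 - Real.exp (-1)) • X := by
    ext ω
    rcases hX01 ω with h | h <;> simp [h]
  rw [h]
  filter_upwards [condExp_sub (integrable_const _) (hX.smul (1 - Real.exp (-1))) m,
    condExp_smul (μ := μ) (1 - Real.exp (-1)) X m] with ω h1 h2
  rw [h1, Pi.sub_apply, h2, condExp_const hm]
  rfl

end Bernoulli

end MeasureTheory

theorem Real.exp_half_mul_one_sub_le_one {p : ℝ} (hp : 0 ≤ p) :
    Real.exp (p / 2) * (1 - (1 - Real.exp (-1)) * p) ≤ 1 := by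
  have hc : 1 / 2 ≤ 1 - Real.exp (-1) := by
    have : (2 : ℝ) ≤ Real.exp 1 := by linarith [Real.add_one_le_exp (1 : ℝ)]
    rw [Real.exp_neg]
    linarith [inv_anti₀ two_pos this]
  calc Real.exp (p / 2) * (1 - (1 - Real.exp (-1)) * p)
      ≤ Real.exp (p / 2) * Real.exp (-((1 - Real.exp (-1)) * p)) := by
        gcongr
        linarith [Real.add_one_le_exp (-((1 - Real.exp (-1)) * p))]
    _ = Real.exp (p / 2 - (1 - Real.exp (-1)) * p) := by rw [← Real.exp_add]; ring_nf
    _ ≤ 1 := Real.exp_le_one_iff.2 (by nlinarith)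

open MeasureTheory

noncomputable def lowerTailProcess {Ω : Type*} (X P : ℕ → Ω → ℝ) (n : ℕ) (ω : Ω) : ℝ :=
  Real.exp ((∑ t ∈ Finset.Icc 1 n, P t ω) / 2 - ∑ t ∈ Finset.Icc 1 n, X t ω)

section LowerTailProcess

variable {Ω : Type*} {m0 : MeasurableSpace Ω} {μ : Measure Ω} {F : Filtration ℕ m0}
  {X P : ℕ → Ω → ℝ}

theorem lowerTailProcess_pos (n : ℕ) (ω : Ω) : 0 < lowerTailProcess X P n ω := Real.exp_pos _

@[simp]
theorem lowerTailProcess_zero : lowerTailProcess X P 0 = 1 := by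
  ext ω
  simp [lowerTailProcess]

theorem lowerTailProcess_succ (n : ℕ) :
    lowerTailProcess X P (n + 1) =
      (fun ω ↦ lowerTailProcess X P n ω * Real.exp (P (n + 1) ω / 2)) *
        fun ω ↦ Real.exp (-X (n + 1) ω) := by
  ext ω
  simp only [lowerTailProcess, Pi.mul_apply, ← Real.exp_add,
    Finset.sum_Icc_succ_top (Nat.le_add_left 1 n)]
  ring_nf

theorem lowerTailProcess_le_exp {n : ℕ} {ω : Ω} (hX : ∀ t ∈ Finset.Icc 1 n, 0 ≤ X t ω)
    (hP : ∀ t ∈ Finset.Icc 1 n, P t ω ≤ 1) : lowerTailProcess X P n ω ≤ Real.exp (n / 2) := by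
  have hPsum : ∑ t ∈ Finset.Icc 1 n, P t ω ≤ n := by
    simpa using Finset.sum_le_sum hP
  have hXsum : 0 ≤ ∑ t ∈ Finset.Icc 1 n, X t ω := Finset.sum_nonneg hX
  exact Real.exp_le_exp.2 (by linarith)

theorem measurable_lowerTailProcess (hXmeas : ∀ i, 1 ≤ i → Measurable[F i] (X i))
    (hPmeas : ∀ i, 1 ≤ i → Measurable[F (i - 1)] (P i)) (n : ℕ) :
    Measurable[F n] (lowerTailProcess X P n) := by
  refine .exp (.sub (.div_const (Finset.measurable_sum _ fun t ht ↦ ?_) _)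
    (Finset.measurable_sum _ fun t ht ↦ ?_)) <;> rw [Finset.mem_Icc] at ht
  · exact (hPmeas t ht.1).mono (F.mono (by omega)) le_rfl
  · exact (hXmeas t ht.1).mono (F.mono ht.2) le_rfl

theorem integrable_lowerTailProcess [IsFiniteMeasure μ] (hX : ∀ i ω, 0 ≤ X i ω)
    (hXmeas : ∀ i, 1 ≤ i → Measurable[F i] (X i))
    (hPmeas : ∀ i, 1 ≤ i → Measurable[F (i - 1)] (P i))
    (hP : ∀ᵐ ω ∂μ, ∀ i, 1 ≤ i → P i ω ≤ 1) (n : ℕ) :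
    Integrable (lowerTailProcess X P n) μ := by
  refine .of_bound ((measurable_lowerTailProcess hXmeas hPmeas n).mono (F.le n) le_rfl
    ).aestronglyMeasurable (Real.exp (n / 2)) ?_
  filter_upwards [hP] with ω hω
  rw [Real.norm_of_nonneg (lowerTailProcess_pos n ω).le]
  exact lowerTailProcess_le_exp (fun t _ ↦ hX t ω) fun t ht ↦ hω t (Finset.mem_Icc.1 ht).1

theorem supermartingale_lowerTailProcess [IsFiniteMeasure μ]
    (hX01 : ∀ i ω, X i ω = 0 ∨ X i ω = 1)
    (hXmeas : ∀ i, 1 ≤ i → Measurable[F i] (X i))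
    (hPmeas : ∀ i, 1 ≤ i → Measurable[F (i - 1)] (P i))
    (hcond : ∀ i, 1 ≤ i → μ[X i|F (i - 1)] =ᵐ[μ] P i) :
    Supermartingale (lowerTailProcess X P) F μ := by
  have hX : ∀ i ω, X i ω ∈ Set.Icc 0 1 := fun i ω ↦ by
    rcases hX01 i ω with h | h <;> simp [h]
  have hP : ∀ᵐ ω ∂μ, ∀ i, 1 ≤ i → P i ω ∈ Set.Icc 0 1 := ae_all_iff.2 fun i ↦ by
    by_cases hi : 1 ≤ i
    · filter_upwards [hcond i hi, condExp_mem_Icc_zero_one (X := X i) (hX i)] with ω h h01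
      exact fun _ ↦ h ▸ h01
    · exact ae_of_all _ fun ω h ↦ absurd h hi
  have hXint : ∀ i, 1 ≤ i → Integrable (X i) μ := fun i hi ↦
    .of_bound ((hXmeas i hi).mono (F.le i) le_rfl).aestronglyMeasurable 1
      (ae_of_all _ fun ω ↦ by rw [Real.norm_of_nonneg (hX i ω).1]; exact (hX i ω).2)
  have hmeas := measurable_lowerTailProcess hXmeas hPmeas
  have hint := integrable_lowerTailProcess (fun i ω ↦ (hX i ω).1) hXmeas hPmeas
    (hP.mono fun ω hω i hi ↦ (hω i hi).2)
  refine supermartingale_nat (fun n ↦ (hmeas n).stronglyMeasurable) hint fun n ↦ ?_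
  have hPn : Measurable[F n] (P (n + 1)) := by simpa using hPmeas (n + 1) le_add_self
  have hcondn : μ[X (n + 1)|F n] =ᵐ[μ] P (n + 1) := by simpa using hcond (n + 1) le_add_self
  have hexp_int : Integrable (fun ω ↦ Real.exp (-X (n + 1) ω)) μ :=
    .of_bound ((hXmeas (n + 1) le_add_self).mono (F.le _) le_rfl).neg.exp.aestronglyMeasurable 1
      (ae_of_all _ fun ω ↦ by
        rw [Real.norm_of_nonneg (Real.exp_pos _).le, Real.exp_le_one_iff, neg_nonpos]
        exact (hX _ ω).1)
  have hpull := condExp_mul_of_stronglyMeasurable_left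
    (f := fun ω ↦ lowerTailProcess X P n ω * Real.exp (P (n + 1) ω / 2))
    ((hmeas n).mul (hPn.div_const 2).exp).stronglyMeasurable
    (lowerTailProcess_succ (X := X) (P := P) n ▸ hint (n + 1)) hexp_int
  rw [lowerTailProcess_succ]
  filter_upwards [hpull, hcondn, hP,
    condExp_exp_neg_ae_eq (F.le n) (hX01 (n + 1)) (hXint (n + 1) le_add_self)]
    with ω h_pull h_cond h01 h_exp
  rw [h_pull, Pi.mul_apply, h_exp, h_cond, mul_assoc]
  exact mul_le_of_le_one_right (Real.exp_pos _).le
    (Real.exp_half_mul_one_sub_le_one (h01 (n + 1) le_add_self).1)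

end LowerTailProcess

/-- Time-uniform lower-tail bound for adapted Bernoulli sums: if
`(F_i)` is a filtration, each `X_i` is `{0,1}`-valued and `F_i`-measurable, each `P_i` is
`F_{i−1}`-measurable, and `ℙ(X_i = 1 | F_{i−1}) = P_i` (i.e. `𝔼[X_i | F_{i−1}] = P_i`
a.s.), then for every real `W`,
`ℙ[∃ n ≥ 1 : ∑_{t=1}^n X_t < (1/2)∑_{t=1}^n P_t − W] ≤ e^{−W}`. -/
theorem stmt11 {Ω : Type*} {m0 : MeasurableSpace Ω} (μ : Measure Ω)
    [IsProbabilityMeasure μ]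
    (F : Filtration ℕ m0)
    (X P : ℕ → Ω → ℝ)
    (hX01 : ∀ i ω, X i ω = 0 ∨ X i ω = 1)
    (hXmeas : ∀ i, 1 ≤ i → Measurable[F i] (X i))
    (hPmeas : ∀ i, 1 ≤ i → Measurable[F (i - 1)] (P i))
    (hcond : ∀ i, 1 ≤ i → μ[X i|F (i - 1)] =ᵐ[μ] P i)
    (W : ℝ) :
    μ {ω | ∃ n, 1 ≤ n ∧
        ∑ t ∈ Finset.Icc 1 n, X t ω < (∑ t ∈ Finset.Icc 1 n, P t ω) / 2 - W}
      ≤ ENNReal.ofReal (Real.exp (-W)) := by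
  have hsuper := supermartingale_lowerTailProcess hX01 hXmeas hPmeas hcond
  calc _ ≤ μ {ω | ∃ n, Real.exp W ≤ lowerTailProcess X P n ω} := by
        refine measure_mono fun ω ⟨n, _, hn⟩ ↦ ⟨n, Real.exp_le_exp.2 ?_⟩
        linarith
    _ ≤ ENNReal.ofReal (μ[lowerTailProcess X P 0] / Real.exp W) :=
        hsuper.ville_ineq (fun n ω ↦ (lowerTailProcess_pos n ω).le) (Real.exp_pos W)
    _ = ENNReal.ofReal (Real.exp (-W)) := by simp [Real.exp_neg]
end
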